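/- arXiv:2412.17850 — 3 statements merged into one kernel-verified Lean document; each statement's English description precedes it below -/
import Mathlib

section
/- In 𝔽₄[x]: (i) for a positive integer k, the polynomial σ**(x^{2k}) splits over 𝔽₄ if and only if 2k ∈ {2, 4, 6}; (ii) for a natural number k, the polynomial σ**(x^{2k+1}) splits over 𝔽₄ if and only if 2k+1 = N·2^n − 1 for some natural number n and some N ∈ {1, 3}. -/
open Polynomial
open scoped Classical

noncomputable section

/-- The field with four elements. -/
abbrev F4 : Type := GaloisField 2 2

/-- `D` is a unitary divisor of `S`: `D ∣ S` and `gcd(D, S / D) = 1`. -/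
def IsUnitaryDivisor (D S : F4[X]) : Prop :=
  D ∣ S ∧ IsCoprime D (S / D)

/-- The greatest common unitary divisor of `S` and `T`: a monic common unitary
divisor of `S` and `T` of maximal degree. -/
noncomputable def gcdU (S T : F4[X]) : F4[X] :=
  if h : ∃ D : F4[X], D.Monic ∧ IsUnitaryDivisor D S ∧ IsUnitaryDivisor D T ∧
      ∀ E : F4[X], E.Monic → IsUnitaryDivisor E S → IsUnitaryDivisor E T →
        E.degree ≤ D.degree
  then h.choose else 0

/-- `D` is a bi-unitary divisor of `S`: `D ∣ S` and `gcd_u(D, S / D) = 1`. -/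
def IsBiunitaryDivisor (D S : F4[X]) : Prop :=
  D ∣ S ∧ gcdU D (S / D) = 1

/-- `σ(S)`: the sum of all monic divisors of `S`. -/
noncomputable def sigma' (S : F4[X]) : F4[X] :=
  ∑ᶠ D ∈ {D : F4[X] | D.Monic ∧ D ∣ S}, D

/-- `σ**(S)`: the sum of all monic bi-unitary divisors of `S`. -/
noncomputable def sigmaBU (S : F4[X]) : F4[X] :=
  ∑ᶠ D ∈ {D : F4[X] | D.Monic ∧ IsBiunitaryDivisor D S}, D

/-- `S` is perfect if `σ(S) = S`. -/
def IsPerfect (S : F4[X]) : Prop := sigma' S = S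

/-- `S` is bi-unitary perfect if `σ**(S) = S`. -/
def IsBUPerfect (S : F4[X]) : Prop := sigmaBU S = S

/-- `ω(S)`: the number of distinct monic irreducible factors of `S`. -/
noncomputable def omegaCount (S : F4[X]) : ℕ :=
  Set.ncard {P : F4[X] | P.Monic ∧ Irreducible P ∧ P ∣ S}

/-- `Ω₁`: `P` and `P + 1` are both irreducible. -/
def Omega1 (P : F4[X]) : Prop :=
  Irreducible P ∧ Irreducible (P + 1)

/-- `Ω₂`: `P`, `P + 1`, `P³ + P + 1` and `P³ + P² + 1` are all irreducible. -/
def Omega2 (P : F4[X]) : Prop :=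
  Irreducible P ∧ Irreducible (P + 1) ∧
    Irreducible (P ^ 3 + P + 1) ∧ Irreducible (P ^ 3 + P ^ 2 + 1)

/-- A bi-unitary perfect polynomial is indecomposable if it has no proper
(monic, nontrivial) divisor which is bi-unitary perfect. -/
def IsIndecomposable (A : F4[X]) : Prop :=
  ¬ ∃ D : F4[X], D.Monic ∧ D ∣ A ∧ D ≠ 1 ∧ D ≠ A ∧ IsBUPerfect D

/-!
The bi-unitary divisors of `X ^ m` are the `X ^ e` with `e ≤ m`, except `X ^ (m / 2)` for
even `m > 0`, because `gcd_u(X ^ e, X ^ e) = X ^ e`. Multiplying by `X + 1` telescopes the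
geometric sums: `σ**(X ^ (2k+1)) (X + 1) = X ^ (2k+2) + 1` and
`σ**(X ^ (2k)) (X + 1) = (X ^ k + 1)(X ^ (k+1) + 1)`.
Writing `t = 2 ^ v s` with `s` odd, `X ^ t + 1 = (X ^ s + 1) ^ (2 ^ v)` in characteristic two,
and `X ^ s + 1` is separable, so it can only split over `𝔽₄` if `s ≤ 4`, i.e. `s ∈ {1, 3}`;
conversely `X ^ 3 + 1` divides `X ^ 4 - X`, which splits.
-/

section FiniteField

variable {K : Type*} [Field K] [Finite K]

theorem Polynomial.Splits.natDegree_le_natCard {f : K[X]} (hf : Splits f) (hsep : f.Separable) :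
    f.natDegree ≤ Nat.card K := by
  have := Fintype.ofFinite K
  rw [← card_rootSet_eq_natDegree (K := K) hsep (by simpa using hf), Nat.card_eq_fintype_card]
  exact set_fintype_card_le_univ _

theorem splits_X_pow_sub_one_of_dvd_natCard_sub_one {s : ℕ} (hs : s ∣ Nat.card K - 1) :
    Splits (X ^ s - 1 : K[X]) := by
  have := Fintype.ofFinite K
  rw [Nat.card_eq_fintype_card] at hs
  set q := Fintype.card K
  have hsplit : Splits (X ^ q - X : K[X]) := by
    rw [splits_iff_card_roots, FiniteField.roots_X_pow_card_sub_X,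
      FiniteField.X_pow_card_sub_X_natDegree_eq K Fintype.one_lt_card]
    rfl
  have hfactor : X ^ q - X = X * (X ^ (q - 1) - 1 : K[X]) := by
    rw [mul_sub, ← pow_succ', Nat.sub_add_cancel Fintype.card_pos, mul_one]
  obtain ⟨n, hn⟩ := hs
  refine hsplit.of_dvd (FiniteField.X_pow_card_sub_X_ne_zero K Fintype.one_lt_card) ?_
  rw [hfactor, hn]
  exact dvd_mul_of_dvd_right (pow_one_sub_dvd_pow_mul_sub_one X s n) X

end FiniteField

theorem Polynomial.Splits.of_pow {K : Type*} [Field K] {f : K[X]} {n : ℕ} (hn : n ≠ 0)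
    (h : Splits (f ^ n)) : Splits f := by
  rcases eq_or_ne f 0 with rfl | hf
  · exact Splits.zero
  · exact h.of_dvd (pow_ne_zero n hf) (dvd_pow_self f hn)

theorem splits_X_pow_mul_char_pow_sub_one_iff {K : Type*} [Field K] (p : ℕ) [Fact p.Prime]
    [CharP K p] (s v : ℕ) :
    Splits (X ^ (s * p ^ v) - 1 : K[X]) ↔ Splits (X ^ s - 1 : K[X]) := by
  have hpow : (X ^ s - 1 : K[X]) ^ p ^ v = X ^ (s * p ^ v) - 1 := by
    rw [sub_pow_char_pow, one_pow, pow_mul]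
  rw [← hpow]
  exact ⟨Splits.of_pow (pow_ne_zero v (Fact.out : p.Prime).ne_zero), (Splits.pow · _)⟩

theorem CharTwo.geom_sum_mul_add_one {R : Type*} [CommRing R] [CharP R 2] (x : R) (n : ℕ) :
    (∑ i ∈ Finset.range n, x ^ i) * (x + 1) = x ^ n + 1 := by
  rw [← CharTwo.sub_eq_add, ← CharTwo.sub_eq_add, geom_sum_mul]

theorem isCoprime_pow_pow_iff {R : Type*} [CommRing R] {p : R} (hp : ¬IsUnit p) {a b : ℕ} :
    IsCoprime (p ^ a) (p ^ b) ↔ a = 0 ∨ b = 0 := by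
  refine ⟨fun h => ?_, ?_⟩
  · by_contra! hab
    exact hp (isCoprime_self.mp
      ((h.of_isCoprime_of_dvd_left (dvd_pow_self p hab.1)).of_isCoprime_of_dvd_right
        (dvd_pow_self p hab.2)))
  · rintro (rfl | rfl)
    · exact pow_zero p ▸ isCoprime_one_left
    · exact pow_zero p ▸ isCoprime_one_right

section XPow

variable {K : Type*} [Field K]

theorem Polynomial.X_pow_div_X_pow {e m : ℕ} (h : e ≤ m) :
    (X : K[X]) ^ m / X ^ e = X ^ (m - e) := by
  rw [← pow_sub_mul_pow (X : K[X]) h]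
  exact mul_div_cancel_right₀ _ (pow_ne_zero _ X_ne_zero)

theorem Polynomial.Monic.eq_X_pow_of_dvd_X_pow {D : K[X]} {m : ℕ} (hD : D.Monic)
    (h : D ∣ X ^ m) : ∃ e ≤ m, D = X ^ e := by
  obtain ⟨e, he, hassoc⟩ := (dvd_prime_pow prime_X m).mp h
  exact ⟨e, he, eq_of_monic_of_associated hD (monic_X_pow e) hassoc⟩

theorem Polynomial.X_pow_inj {i j : ℕ} : (X : K[X]) ^ i = X ^ j ↔ i = j :=
  pow_inj_of_not_isUnit not_isUnit_X X_ne_zero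

end XPow

section BiunitaryDivisorsOfXPow

theorem isUnitaryDivisor_one (S : F4[X]) : IsUnitaryDivisor 1 S :=
  ⟨one_dvd S, isCoprime_one_left⟩

theorem isUnitaryDivisor_X_pow_iff {E : F4[X]} {i : ℕ} (hE : E.Monic) :
    IsUnitaryDivisor E (X ^ i) ↔ E = 1 ∨ E = X ^ i := by
  constructor
  · rintro ⟨hdvd, hcop⟩
    obtain ⟨e, he, rfl⟩ := hE.eq_X_pow_of_dvd_X_pow hdvd
    rw [X_pow_div_X_pow he, isCoprime_pow_pow_iff not_isUnit_X] at hcop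
    rcases hcop with rfl | h
    · exact .inl (pow_zero X)
    · exact .inr (by rw [show e = i by omega])
  · rintro (rfl | rfl)
    · exact isUnitaryDivisor_one _
    · refine ⟨dvd_rfl, ?_⟩
      rw [X_pow_div_X_pow le_rfl, Nat.sub_self, pow_zero]
      exact isCoprime_one_right

theorem gcdU_eq_of_forall_eq_or_degree_lt {S T D : F4[X]} (hD : D.Monic)
    (hS : IsUnitaryDivisor D S) (hT : IsUnitaryDivisor D T)
    (h : ∀ E : F4[X], E.Monic → IsUnitaryDivisor E S → IsUnitaryDivisor E T →
      E = D ∨ E.degree < D.degree) :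
    gcdU S T = D := by
  have hex : ∃ D : F4[X], D.Monic ∧ IsUnitaryDivisor D S ∧ IsUnitaryDivisor D T ∧
      ∀ E : F4[X], E.Monic → IsUnitaryDivisor E S → IsUnitaryDivisor E T →
        E.degree ≤ D.degree :=
    ⟨D, hD, hS, hT, fun E hE hES hET =>
      (h E hE hES hET).elim (fun hED => hED ▸ le_rfl) le_of_lt⟩
  rw [gcdU, dif_pos hex]
  obtain ⟨hm, hDS, hDT, hmax⟩ := hex.choose_spec
  exact (h _ hm hDS hDT).resolve_right (not_lt.mpr (hmax D hD hS hT))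

theorem gcdU_X_pow_X_pow (i j : ℕ) :
    gcdU ((X : F4[X]) ^ i) (X ^ j) = if i = j then X ^ i else 1 := by
  split_ifs with hij
  · subst hij
    have hself := (isUnitaryDivisor_X_pow_iff (monic_X_pow i)).mpr (.inr rfl)
    refine gcdU_eq_of_forall_eq_or_degree_lt (monic_X_pow i) hself hself fun E hE hEi _ => ?_
    rcases (isUnitaryDivisor_X_pow_iff hE).mp hEi with rfl | rfl
    · rcases eq_or_ne i 0 with rfl | hi
      · exact .inl (pow_zero X).symm
      · exact .inr (by simpa using Nat.pos_of_ne_zero hi)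
    · exact .inl rfl
  · refine gcdU_eq_of_forall_eq_or_degree_lt monic_one (isUnitaryDivisor_one _)
      (isUnitaryDivisor_one _) fun E hE hEi hEj => .inl ?_
    rcases (isUnitaryDivisor_X_pow_iff hE).mp hEi with rfl | rfl
    · rfl
    · exact ((isUnitaryDivisor_X_pow_iff hE).mp hEj).resolve_right (mt X_pow_inj.mp hij)

theorem isBiunitaryDivisor_X_pow_iff {e m : ℕ} (he : e ≤ m) :
    IsBiunitaryDivisor ((X : F4[X]) ^ e) (X ^ m) ↔ 2 * e ≠ m ∨ e = 0 := by
  rw [IsBiunitaryDivisor, X_pow_div_X_pow he, gcdU_X_pow_X_pow, ← pow_zero (X : F4[X])]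
  simp only [pow_dvd_pow X he, true_and]
  split_ifs with h
  · rw [X_pow_inj]; omega
  · exact iff_of_true rfl (by omega)

theorem sigmaBU_X_pow (m : ℕ) :
    sigmaBU ((X : F4[X]) ^ m) =
      ∑ e ∈ (Finset.range (m + 1)).filter (fun e => 2 * e ≠ m ∨ e = 0), X ^ e := by
  have hset : {D : F4[X] | D.Monic ∧ IsBiunitaryDivisor D (X ^ m)} =
      ↑(((Finset.range (m + 1)).filter (fun e => 2 * e ≠ m ∨ e = 0)).image
        ((X : F4[X]) ^ ·)) := by
    ext D
    simp only [Set.mem_ofPred_eq, Finset.coe_image, Set.mem_image, Finset.coe_filter,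
      Finset.mem_range, Nat.lt_succ_iff]
    constructor
    · rintro ⟨hD, hbi⟩
      obtain ⟨e, he, rfl⟩ := hD.eq_X_pow_of_dvd_X_pow hbi.1
      exact ⟨e, ⟨he, (isBiunitaryDivisor_X_pow_iff he).mp hbi⟩, rfl⟩
    · rintro ⟨e, ⟨he, hcond⟩, rfl⟩
      exact ⟨monic_X_pow e, (isBiunitaryDivisor_X_pow_iff he).mpr hcond⟩
  rw [sigmaBU, hset, finsum_mem_coe_finset, Finset.sum_image fun a _ b _ => X_pow_inj.mp]

theorem sigmaBU_X_pow_two_mul_add_one_mul (k : ℕ) :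
    sigmaBU ((X : F4[X]) ^ (2 * k + 1)) * (X + 1) = X ^ (2 * k + 2) + 1 := by
  rw [sigmaBU_X_pow, Finset.filter_true_of_mem fun e _ => .inl (by omega),
    CharTwo.geom_sum_mul_add_one]

theorem sigmaBU_X_pow_two_mul_mul {k : ℕ} (hk : 0 < k) :
    sigmaBU ((X : F4[X]) ^ (2 * k)) * (X + 1) = (X ^ k + 1) * (X ^ (k + 1) + 1) := by
  have hfilter : (Finset.range (2 * k + 1)).filter (fun e => 2 * e ≠ 2 * k ∨ e = 0) =
      (Finset.range (2 * k + 1)).erase k := by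
    ext e
    simp only [Finset.mem_filter, Finset.mem_erase, Finset.mem_range]
    omega
  rw [sigmaBU_X_pow, hfilter, Finset.sum_erase_eq_sub (Finset.mem_range.mpr (by omega)), sub_mul,
    CharTwo.geom_sum_mul_add_one, CharTwo.sub_eq_add]
  ring_nf

end BiunitaryDivisorsOfXPow

section SplittingOverF4

theorem natCard_F4 : Nat.card F4 = 4 :=
  GaloisField.card 2 2 two_ne_zero

theorem splits_X_pow_add_one_iff_of_odd {s : ℕ} (hs : Odd s) :
    Splits (X ^ s + 1 : F4[X]) ↔ s = 1 ∨ s = 3 := by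
  rw [← CharTwo.sub_eq_add]
  constructor
  · intro h
    have hsep : (X ^ s - 1 : F4[X]).Separable := by
      rw [X_pow_sub_one_separable_iff, Ne, CharP.cast_eq_zero_iff F4 2]
      exact hs.not_two_dvd_nat
    have hle := h.natDegree_le_natCard hsep
    rw [← C_1, natDegree_X_pow_sub_C, natCard_F4] at hle
    obtain ⟨j, rfl⟩ := hs
    omega
  · rintro (rfl | rfl) <;>
      exact splits_X_pow_sub_one_of_dvd_natCard_sub_one (by norm_num [natCard_F4])

theorem splits_X_pow_add_one_iff {t : ℕ} (ht : t ≠ 0) :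
    Splits (X ^ t + 1 : F4[X]) ↔ ∃ n : ℕ, ∃ N ∈ ({1, 3} : Set ℕ), t = N * 2 ^ n := by
  have hodd_part (s v : ℕ) :
      Splits (X ^ (s * 2 ^ v) + 1 : F4[X]) ↔ Splits (X ^ s + 1 : F4[X]) := by
    simpa only [CharTwo.sub_eq_add] using splits_X_pow_mul_char_pow_sub_one_iff (K := F4) 2 s v
  constructor
  · obtain ⟨v, s, hs, rfl⟩ := Nat.exists_eq_two_pow_mul_odd ht
    rw [mul_comm, hodd_part, splits_X_pow_add_one_iff_of_odd hs]
    exact fun hs1 => ⟨v, s, hs1, rfl⟩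
  · rintro ⟨n, N, hN, rfl⟩
    rw [hodd_part, splits_X_pow_add_one_iff_of_odd (by rcases hN with rfl | rfl <;> decide)]
    exact hN

end SplittingOverF4

theorem eq_of_odd_of_eq_mul_two_pow {t N n : ℕ} (ht : Odd t) (h : t = N * 2 ^ n) : t = N := by
  cases n with
  | zero => simpa using h
  | succ n =>
    have heven : Even t := h ▸ (Nat.even_pow.mpr ⟨even_two, n.succ_ne_zero⟩).mul_left N
    exact absurd heven (Nat.not_even_iff_odd.mpr ht)

theorem consecutive_one_or_three_mul_two_pow_iff {k : ℕ} (hk : 0 < k) :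
    ((∃ n : ℕ, ∃ N ∈ ({1, 3} : Set ℕ), k = N * 2 ^ n) ∧
        ∃ n : ℕ, ∃ N ∈ ({1, 3} : Set ℕ), k + 1 = N * 2 ^ n) ↔
      2 * k ∈ ({2, 4, 6} : Set ℕ) := by
  simp only [Set.mem_insert_iff, Set.mem_singleton_iff]
  constructor
  · rintro ⟨⟨n, N, hN, hkN⟩, ⟨m, M, hM, hkM⟩⟩
    rcases Nat.even_or_odd k with heven | hodd
    · have := eq_of_odd_of_eq_mul_two_pow heven.add_one hkM
      omega
    · have := eq_of_odd_of_eq_mul_two_pow hodd hkN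
      omega
  · intro h
    obtain rfl | rfl | rfl : k = 1 ∨ k = 2 ∨ k = 3 := by omega
    · exact ⟨⟨0, 1, .inl rfl, rfl⟩, ⟨1, 1, .inl rfl, rfl⟩⟩
    · exact ⟨⟨1, 1, .inl rfl, rfl⟩, ⟨0, 3, .inr rfl, rfl⟩⟩
    · exact ⟨⟨0, 3, .inr rfl, rfl⟩, ⟨2, 1, .inl rfl, rfl⟩⟩

theorem stmt7 :
    (∀ k : ℕ, 0 < k →
      (Splits ((sigmaBU (X ^ (2 * k))).map (RingHom.id F4)) ↔ 2 * k ∈ ({2, 4, 6} : Set ℕ))) ∧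
    (∀ k : ℕ,
      (Splits ((sigmaBU (X ^ (2 * k + 1))).map (RingHom.id F4)) ↔
        ∃ n : ℕ, ∃ N ∈ ({1, 3} : Set ℕ), 2 * k + 1 = N * 2 ^ n - 1)) := by
  have hX1 : (X + 1 : F4[X]) ≠ 0 := by simpa using X_add_C_ne_zero (1 : F4)
  have hsplitX1 : Splits (X + 1 : F4[X]) := by simpa using Splits.X_add_C (1 : F4)
  have hne {t : ℕ} (ht : t ≠ 0) : (X ^ t + 1 : F4[X]) ≠ 0 := by
    simpa using X_pow_add_C_ne_zero (Nat.pos_of_ne_zero ht) (1 : F4)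
  simp only [Polynomial.map_id]
  refine ⟨fun k hk => ?_, fun k => ?_⟩
  · rw [← splits_mul_iff_left hX1 hsplitX1, sigmaBU_X_pow_two_mul_mul hk,
      splits_mul (hne hk.ne') (hne k.succ_ne_zero), splits_X_pow_add_one_iff hk.ne',
      splits_X_pow_add_one_iff k.succ_ne_zero]
    exact consecutive_one_or_three_mul_two_pow_iff hk
  · rw [← splits_mul_iff_left hX1 hsplitX1, sigmaBU_X_pow_two_mul_add_one_mul,
      splits_X_pow_add_one_iff (by omega)]
    exact exists_congr fun n => exists_congr fun N => and_congr_right fun _ => by omega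
end
end

section
/- Let A = P^h Q^k in 𝔽₄[x], where P and Q are distinct monic irreducible polynomials with deg P ≤ deg Q and h, k are positive integers. If A is bi-unitary perfect, then Q = P + 1 and either h = k = 2, or h = k = 2^r − 1 for some natural number r. -/
/-!
The bi-unitary divisors of `P ^ h * Q ^ k` are the `P ^ a * Q ^ b` with `a ≠ h / 2` and
`b ≠ k / 2` (exponent `0` always allowed), so `σ**(P ^ h * Q ^ k) = σ**(P ^ h) σ**(Q ^ k)`, and
`σ**(P ^ h) ≡ 1 mod P`. Perfection therefore makes `σ**(P ^ h)` an associate of `Q ^ k`.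

In characteristic 2, `(P + 1) σ**(P ^ h)` is `P ^ (h + 1) + 1` for odd `h` and
`(P ^ m + 1) (P ^ (m + 1) + 1)` for `h = 2 m`; either way `P + 1` divides a power of `Q`, and
`deg P ≤ deg Q` forces `Q = P + 1`. Finally, writing `n = 2 ^ a m` with `m` odd,
`P ^ n + 1 = ((P + 1) (1 + P + ⋯ + P ^ (m - 1))) ^ (2 ^ a)` with the second factor coprime to
`P + 1`, so `P ^ n + 1` divides a power of `P + 1` only if `n` is a power of 2. This applies to
`n = h + 1` in the odd case, and to both `n = m` and `n = m + 1` in the even case, forcing `m = 1`.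
-/

open Polynomial
open scoped Classical

noncomputable section

open Finset

theorem pow_mul_pow_eq_mul_of_le {M : Type*} [CommMonoid M] (x y : M) {a b c d : ℕ} (hc : c ≤ a)
    (hd : d ≤ b) : x ^ a * y ^ b = x ^ c * y ^ d * (x ^ (a - c) * y ^ (b - d)) := by
  rw [mul_mul_mul_comm, ← pow_add, ← pow_add, Nat.add_sub_cancel' hc, Nat.add_sub_cancel' hd]

section GeomSum

variable {R : Type*} [CommRing R]

theorem isCoprime_add_one_geom_sum {x : R} {m : ℕ} (hm : Odd m) :
    IsCoprime (x + 1) (∑ i ∈ range m, x ^ i) := by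
  obtain ⟨j, rfl⟩ := hm
  induction j with
  | zero => simpa using isCoprime_one_right
  | succ j ih =>
    rw [show 2 * (j + 1) + 1 = 2 * j + 1 + 1 + 1 by ring, sum_range_succ, sum_range_succ, add_assoc]
    convert ih.add_mul_left_right (x ^ (2 * j + 1)) using 2
    ring

variable [CharP R 2]

theorem add_one_mul_geom_sum (x : R) (m : ℕ) :
    (x + 1) * ∑ i ∈ range m, x ^ i = x ^ m + 1 := by
  simpa [CharTwo.sub_eq_add, mul_comm] using geom_sum_mul x m

end GeomSum

section Field

variable {K : Type*} [Field K]

theorem natDegree_pow_add_one (P : K[X]) (n : ℕ) : (P ^ n + 1).natDegree = n * P.natDegree := by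
  rw [← C_1, natDegree_add_C, natDegree_pow]

theorem natDegree_add_one (P : K[X]) : (P + 1).natDegree = P.natDegree := by
  rw [← C_1, natDegree_add_C]

theorem natDegree_eq_of_associated_pow {S Q : K[X]} {k : ℕ} (hS : Associated S (Q ^ k)) :
    S.natDegree = k * Q.natDegree := by
  rw [natDegree_eq_of_degree_eq (degree_eq_degree_of_associated hS), natDegree_pow]

theorem monic_add_one {P : K[X]} (hPm : P.Monic) (hP : 0 < P.natDegree) : (P + 1).Monic :=
  hPm.add_of_left (by rwa [degree_one, ← natDegree_pos_iff_degree_pos])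

theorem eq_of_dvd_pow_of_natDegree_le {F Q : K[X]} (hF : F.Monic) (hF0 : 0 < F.natDegree)
    (hQ : Q.Monic) (hQi : Irreducible Q) {k : ℕ} (hdvd : F ∣ Q ^ k)
    (hdeg : F.natDegree ≤ Q.natDegree) : F = Q := by
  obtain ⟨i, -, hi⟩ := (dvd_prime_pow hQi.prime k).mp hdvd
  have hi0 : i ≠ 0 := by
    rintro rfl
    exact hF0.ne' (natDegree_eq_zero_of_isUnit (associated_one_iff_isUnit.mp (by simpa using hi)))
  exact eq_of_monic_of_dvd_of_natDegree_le hQ hF ((dvd_pow_self Q hi0).trans hi.symm.dvd) hdeg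

theorem eq_add_one_of_add_one_dvd_pow {P Q : K[X]} (hPm : P.Monic) (hP : 0 < P.natDegree)
    (hQm : Q.Monic) (hQi : Irreducible Q) (hdeg : P.natDegree ≤ Q.natDegree) {k : ℕ}
    (hdvd : P + 1 ∣ Q ^ k) : Q = P + 1 := by
  refine (eq_of_dvd_pow_of_natDegree_le (monic_add_one hPm hP) ?_ hQm hQi hdvd ?_).symm <;>
    rwa [natDegree_add_one]

variable [CharP K 2]

theorem exists_eq_two_pow_of_pow_add_one_dvd {P : K[X]} (hP : 0 < P.natDegree) {n j : ℕ}
    (hn : n ≠ 0) (hdvd : P ^ n + 1 ∣ (P + 1) ^ j) : ∃ a, n = 2 ^ a := by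
  obtain ⟨a, m, hm, rfl⟩ := Nat.exists_eq_two_pow_mul_odd hn
  refine ⟨a, ?_⟩
  set G := ∑ i ∈ range m, P ^ i
  have hfac : P ^ m + 1 = (P + 1) * G := (add_one_mul_geom_sum P m).symm
  -- Frobenius: `P ^ (2 ^ a * m) + 1 = (P ^ m + 1) ^ 2 ^ a`.
  have hG : G ∣ (P + 1) ^ j := by
    refine Dvd.dvd.trans ?_ hdvd
    rw [mul_comm, pow_mul, ← one_pow (2 ^ a), ← add_pow_char_pow, hfac]
    exact (dvd_mul_left G _).trans (dvd_pow_self _ (by positivity))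
  have hGu : IsUnit G :=
    (isCoprime_add_one_geom_sum hm).symm.pow_right.isUnit_of_dvd' dvd_rfl hG
  have hdeg := congrArg natDegree hfac
  have hP1 : P + 1 ≠ 0 := ne_zero_of_natDegree_gt (n := 0) (by rwa [natDegree_add_one])
  rw [natDegree_mul hP1 hGu.ne_zero, natDegree_eq_zero_of_isUnit hGu, natDegree_pow_add_one,
    natDegree_add_one, add_zero] at hdeg
  simpa using Nat.eq_of_mul_eq_mul_right hP (hdeg.trans (one_mul _).symm)

end Field

def biunitaryExponents (h : ℕ) : Finset ℕ := {a ∈ range (h + 1) | a = 0 ∨ 2 * a ≠ h}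

/-- `σ**(x ^ h)` when `x` is irreducible: the divisor `x ^ (h / 2)` of an even power is the only
one that is not bi-unitary. -/
def biunitaryPowSum {R : Type*} [CommSemiring R] (x : R) (h : ℕ) : R :=
  ∑ a ∈ biunitaryExponents h, x ^ a

section BiunitaryPowSum

variable {R : Type*} [CommRing R]

theorem isCoprime_biunitaryPowSum (x : R) (h : ℕ) : IsCoprime x (biunitaryPowSum x h) := by
  have h0 : 0 ∈ biunitaryExponents h := by simp [biunitaryExponents]
  obtain ⟨t, ht⟩ : x ∣ ∑ a ∈ (biunitaryExponents h).erase 0, x ^ a :=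
    dvd_sum fun a ha => dvd_pow_self x (ne_of_mem_erase ha)
  rw [biunitaryPowSum, ← add_sum_erase _ _ h0, ht, pow_zero]
  exact isCoprime_one_right.add_mul_left_right t

theorem biunitaryPowSum_of_odd (x : R) {h : ℕ} (hh : Odd h) :
    biunitaryPowSum x h = ∑ i ∈ range (h + 1), x ^ i := by
  rw [biunitaryPowSum, biunitaryExponents, filter_true_of_mem]
  intro a _
  obtain ⟨j, rfl⟩ := hh
  omega

theorem biunitaryPowSum_two_mul (x : R) {m : ℕ} (hm : m ≠ 0) :
    biunitaryPowSum x (2 * m) = (∑ i ∈ range m, x ^ i) * (x ^ (m + 1) + 1) := by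
  have hexp : biunitaryExponents (2 * m) = (range (2 * m + 1)).erase m := by
    ext a
    simp only [biunitaryExponents, mem_filter, mem_erase, mem_range]
    omega
  have hfull :=
    sum_erase_add (range (2 * m + 1)) (fun i => x ^ i) (a := m) (mem_range.mpr (by omega))
  rw [← hexp, show 2 * m + 1 = m + 1 + m by ring, sum_range_add, sum_range_succ] at hfull
  simp only [pow_add x (m + 1), ← mul_sum] at hfull
  rw [biunitaryPowSum]
  linear_combination hfull

end BiunitaryPowSum

section CharTwo

variable {K : Type*} [Field K] [CharP K 2] {P Q : K[X]} (hPm : P.Monic) (hP : 0 < P.natDegree)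
  (hQm : Q.Monic) (hQi : Irreducible Q) (hdeg : P.natDegree ≤ Q.natDegree)

include hPm hP hQm hQi hdeg

theorem eq_add_one_of_associated_biunitaryPowSum_of_odd {h k : ℕ} (hh : Odd h)
    (hS : Associated (biunitaryPowSum P h) (Q ^ k)) :
    Q = P + 1 ∧ ∃ r, h = 2 ^ r - 1 ∧ k = 2 ^ r - 1 := by
  have hP1 : P + 1 ≠ 0 := (monic_add_one hPm hP).ne_zero
  have hPS : (P + 1) * biunitaryPowSum P h = P ^ (h + 1) + 1 := by
    rw [biunitaryPowSum_of_odd P hh, add_one_mul_geom_sum]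
  obtain ⟨n, hn⟩ : ∃ n, h + 1 = 2 * n := by
    obtain ⟨j, rfl⟩ := hh
    exact ⟨j + 1, by ring⟩
  -- `(P + 1) * σ**(P ^ h) = (P ^ n + 1) ^ 2` is divisible by `(P + 1) ^ 2`.
  have hdvd : P + 1 ∣ biunitaryPowSum P h := by
    refine (mul_dvd_mul_iff_left hP1).mp ?_
    rw [hPS, hn, pow_mul', ← sq, show (P ^ n) ^ 2 + 1 = (P ^ n + 1) ^ 2 by
      rw [CharTwo.add_sq, one_pow]]
    exact pow_dvd_pow_of_dvd (Dvd.intro _ (add_one_mul_geom_sum P n)) 2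
  obtain rfl : Q = P + 1 := eq_add_one_of_add_one_dvd_pow hPm hP hQm hQi hdeg (hdvd.trans hS.dvd)
  obtain ⟨r, hr⟩ := exists_eq_two_pow_of_pow_add_one_dvd hP (j := k + 1) h.succ_ne_zero (by
    rw [← hPS, pow_succ']
    exact mul_dvd_mul_left _ hS.dvd)
  have hkh : (k + 1) * P.natDegree = (h + 1) * P.natDegree := by
    have := congrArg natDegree hPS
    rw [natDegree_mul hP1 (hS.ne_zero_iff.mpr (pow_ne_zero _ hP1)),
      natDegree_eq_of_associated_pow hS, natDegree_add_one,
      natDegree_pow_add_one] at this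
    linarith
  have := Nat.eq_of_mul_eq_mul_right hP hkh
  exact ⟨rfl, r, by omega, by omega⟩

theorem eq_add_one_of_associated_biunitaryPowSum_of_even {h k : ℕ} (hh : Even h) (hh0 : h ≠ 0)
    (hS : Associated (biunitaryPowSum P h) (Q ^ k)) :
    Q = P + 1 ∧ h = 2 ∧ k = 2 := by
  obtain ⟨m, rfl⟩ := hh
  rw [← two_mul] at hS ⊢
  have hm : m ≠ 0 := by omega
  have hSG := biunitaryPowSum_two_mul P hm
  have hB : P ^ (m + 1) + 1 ∣ Q ^ k := (dvd_mul_left _ _).trans (hSG ▸ hS.dvd)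
  obtain rfl : Q = P + 1 := eq_add_one_of_add_one_dvd_pow hPm hP hQm hQi hdeg
    ((Dvd.intro _ (add_one_mul_geom_sum P (m + 1))).trans hB)
  obtain ⟨b, hb⟩ := exists_eq_two_pow_of_pow_add_one_dvd hP m.succ_ne_zero hB
  obtain ⟨c, hc⟩ := exists_eq_two_pow_of_pow_add_one_dvd hP hm (j := k + 1) (by
    rw [← add_one_mul_geom_sum, pow_succ']
    exact mul_dvd_mul_left _ ((dvd_mul_right _ _).trans (hSG ▸ hS.dvd)))
  obtain rfl : m = 1 := by
    rcases c with _ | c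
    · simpa using hc
    rcases b with _ | b
    · rw [pow_zero] at hb
      omega
    rw [pow_succ] at hb hc
    omega
  refine ⟨rfl, rfl, Nat.eq_of_mul_eq_mul_right hP ?_⟩
  rw [← natDegree_add_one, ← natDegree_eq_of_associated_pow hS, hSG, sum_range_one, pow_zero,
    one_mul, natDegree_pow_add_one, natDegree_add_one]

end CharTwo

section TwoPrimes

variable {K : Type*} [Field K] {P Q : K[X]} (hPm : P.Monic) (hQm : Q.Monic)
  (hPi : Irreducible P) (hQi : Irreducible Q)

include hPm hQm hPi hQi

theorem isCoprime_of_irreducible_of_ne (hPQ : P ≠ Q) : IsCoprime P Q :=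
  hPi.coprime_iff_not_dvd.mpr fun h =>
    hPQ (eq_of_monic_of_associated hPm hQm (hPi.associated_of_dvd hQi h))

theorem count_normalizedFactors_pow_mul_pow (hPQ : P ≠ Q) (a b : ℕ) :
    (UniqueFactorizationMonoid.normalizedFactors (P ^ a * Q ^ b)).count P = a := by
  rw [UniqueFactorizationMonoid.normalizedFactors_mul (pow_ne_zero _ hPi.ne_zero)
      (pow_ne_zero _ hQi.ne_zero), UniqueFactorizationMonoid.normalizedFactors_pow,
    UniqueFactorizationMonoid.normalizedFactors_pow,
    UniqueFactorizationMonoid.normalizedFactors_irreducible hPi,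
    UniqueFactorizationMonoid.normalizedFactors_irreducible hQi, hPm.normalize_eq_self,
    hQm.normalize_eq_self]
  simp [hPQ]

theorem pow_mul_pow_injective (hPQ : P ≠ Q) {a b c d : ℕ} (h : P ^ a * Q ^ b = P ^ c * Q ^ d) :
    a = c ∧ b = d := by
  have hQP := count_normalizedFactors_pow_mul_pow hQm hPm hQi hPi hPQ.symm
  refine ⟨?_, ?_⟩
  · simpa only [count_normalizedFactors_pow_mul_pow hPm hQm hPi hQi hPQ] using
      congrArg (fun S => (UniqueFactorizationMonoid.normalizedFactors S).count P) h
  · simpa only [mul_comm (P ^ _), hQP] using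
      congrArg (fun S => (UniqueFactorizationMonoid.normalizedFactors S).count Q) h

theorem exists_eq_pow_mul_pow_of_dvd {E : K[X]} (hEm : E.Monic) {a b : ℕ}
    (hE : E ∣ P ^ a * Q ^ b) : ∃ c ≤ a, ∃ d ≤ b, E = P ^ c * Q ^ d := by
  obtain ⟨e₁, e₂, h₁, h₂, rfl⟩ := exists_dvd_and_dvd_of_dvd_mul hE
  obtain ⟨c, hc, hPc⟩ := (dvd_prime_pow hPi.prime a).mp h₁
  obtain ⟨d, hd, hQd⟩ := (dvd_prime_pow hQi.prime b).mp h₂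
  exact ⟨c, hc, d, hd,
    eq_of_monic_of_associated hEm ((hPm.pow c).mul (hQm.pow d)) (hPc.mul_mul hQd)⟩

theorem isCoprime_pow_mul_pow_iff (hPQ : P ≠ Q) {a b c d : ℕ} :
    IsCoprime (P ^ c * Q ^ d) (P ^ a * Q ^ b) ↔ (c = 0 ∨ a = 0) ∧ (d = 0 ∨ b = 0) := by
  have key {R : K[X]} (hR : Irreducible R) {m n : ℕ} (h : IsCoprime (R ^ m) (R ^ n)) :
      m = 0 ∨ n = 0 := by
    by_contra! hmn
    rw [IsCoprime.pow_left_iff (by omega), IsCoprime.pow_right_iff (by omega),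
      isCoprime_self] at h
    exact hR.not_isUnit h
  constructor
  · intro h
    exact ⟨key hPi h.of_mul_left_left.of_mul_right_left,
      key hQi h.of_mul_left_right.of_mul_right_right⟩
  · rintro ⟨hca, hdb⟩
    have hPQc := isCoprime_of_irreducible_of_ne hPm hQm hPi hQi hPQ
    have hPP : IsCoprime (P ^ c) (P ^ a) := by
      rcases hca with rfl | rfl <;> simp [isCoprime_one_left, isCoprime_one_right]
    have hQQ : IsCoprime (Q ^ d) (Q ^ b) := by
      rcases hdb with rfl | rfl <;> simp [isCoprime_one_left, isCoprime_one_right]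
    exact (hPP.mul_right hPQc.pow).mul_left (hPQc.symm.pow.mul_right hQQ)

end TwoPrimes

theorem gcdU_eq_one_iff {S T : F4[X]} :
    gcdU S T = 1 ↔
      ∀ E : F4[X], E.Monic → IsUnitaryDivisor E S → IsUnitaryDivisor E T → E = 1 := by
  unfold gcdU
  split_ifs with hex
  · obtain ⟨hDm, hDS, hDT, hmax⟩ := hex.choose_spec
    refine ⟨fun h1 E hEm hES hET => ?_, fun hall => hall _ hDm hDS hDT⟩
    have hE := hmax E hEm hES hET
    rw [h1, degree_one] at hE
    exact eq_one_of_monic_natDegree_zero hEm (natDegree_eq_zero_iff_degree_le_zero.mpr hE)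
  · refine ⟨fun h => absurd h zero_ne_one, fun hall => absurd ?_ hex⟩
    have h1 (S : F4[X]) : IsUnitaryDivisor 1 S := ⟨one_dvd S, isCoprime_one_left⟩
    exact ⟨1, monic_one, h1 S, h1 T, fun E hEm hES hET => by rw [hall E hEm hES hET]⟩

theorem isUnitaryDivisor_mul_iff {D T : F4[X]} (hD : D ≠ 0) :
    IsUnitaryDivisor D (D * T) ↔ IsCoprime D T := by
  simp [IsUnitaryDivisor, mul_div_cancel_left₀ T hD]

section BiunitaryDivisors

variable {P Q : F4[X]} (hPm : P.Monic) (hQm : Q.Monic) (hPi : Irreducible P) (hQi : Irreducible Q)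
  (hPQ : P ≠ Q)

include hPm hQm hPi hQi hPQ

theorem isUnitaryDivisor_pow_mul_pow_iff {c d h k : ℕ} (hc : c ≤ h) (hd : d ≤ k) :
    IsUnitaryDivisor (P ^ c * Q ^ d) (P ^ h * Q ^ k) ↔
      (c = 0 ∨ c = h) ∧ (d = 0 ∨ d = k) := by
  rw [pow_mul_pow_eq_mul_of_le P Q hc hd,
    isUnitaryDivisor_mul_iff (mul_ne_zero (pow_ne_zero _ hPi.ne_zero) (pow_ne_zero _ hQi.ne_zero)),
    isCoprime_pow_mul_pow_iff hPm hQm hPi hQi hPQ]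
  omega

theorem gcdU_pow_mul_pow_eq_one_iff {c d c' d' : ℕ} :
    gcdU (P ^ c * Q ^ d) (P ^ c' * Q ^ d') = 1 ↔
      (c = 0 ∨ c ≠ c') ∧ (d = 0 ∨ d ≠ d') := by
  have hU := @isUnitaryDivisor_pow_mul_pow_iff P Q hPm hQm hPi hQi hPQ
  rw [gcdU_eq_one_iff]
  constructor
  · intro hall
    have hmonic (e f : ℕ) : (P ^ e * Q ^ f).Monic := (hPm.pow e).mul (hQm.pow f)
    constructor
    · by_contra! ⟨hc, rfl⟩
      have hP1 : P ^ c * Q ^ 0 = 1 := hall _ (hmonic c 0)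
        ((hU le_rfl (Nat.zero_le d)).mpr (by simp)) ((hU le_rfl (Nat.zero_le d')).mpr (by simp))
      rw [pow_zero, mul_one] at hP1
      exact hPi.not_isUnit ((isUnit_pow_iff hc).mp (hP1 ▸ isUnit_one))
    · by_contra! ⟨hd, rfl⟩
      have hQ1 : P ^ 0 * Q ^ d = 1 := hall _ (hmonic 0 d)
        ((hU (Nat.zero_le c) le_rfl).mpr (by simp)) ((hU (Nat.zero_le c') le_rfl).mpr (by simp))
      rw [pow_zero, one_mul] at hQ1
      exact hQi.not_isUnit ((isUnit_pow_iff hd).mp (hQ1 ▸ isUnit_one))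
  · rintro ⟨hc, hd⟩ E hEm hE hE'
    obtain ⟨e, he, f, hf, rfl⟩ := exists_eq_pow_mul_pow_of_dvd hPm hQm hPi hQi hEm hE.1
    obtain ⟨e', he', f', hf', hEq⟩ := exists_eq_pow_mul_pow_of_dvd hPm hQm hPi hQi hEm hE'.1
    obtain ⟨rfl, rfl⟩ := pow_mul_pow_injective hPm hQm hPi hQi hPQ hEq
    have := (hU he hf).mp hE
    have := (hU he' hf').mp hE'
    obtain rfl : e = 0 := by omega
    obtain rfl : f = 0 := by omega
    simp

theorem isBiunitaryDivisor_pow_mul_pow_iff {c d h k : ℕ} (hc : c ≤ h) (hd : d ≤ k) :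
    IsBiunitaryDivisor (P ^ c * Q ^ d) (P ^ h * Q ^ k) ↔
      c ∈ biunitaryExponents h ∧ d ∈ biunitaryExponents k := by
  rw [IsBiunitaryDivisor, pow_mul_pow_eq_mul_of_le P Q hc hd,
    mul_div_cancel_left₀ _ (mul_ne_zero (pow_ne_zero _ hPi.ne_zero) (pow_ne_zero _ hQi.ne_zero)),
    gcdU_pow_mul_pow_eq_one_iff hPm hQm hPi hQi hPQ]
  simp only [biunitaryExponents, mem_filter, mem_range, dvd_mul_right, true_and]
  omega

theorem sigmaBU_pow_mul_pow (h k : ℕ) :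
    sigmaBU (P ^ h * Q ^ k) = biunitaryPowSum P h * biunitaryPowSum Q k := by
  have hset : {D | D.Monic ∧ IsBiunitaryDivisor D (P ^ h * Q ^ k)} =
      (biunitaryExponents h ×ˢ biunitaryExponents k).image fun e => P ^ e.1 * Q ^ e.2 := by
    ext D
    simp only [Set.mem_ofPred_eq, coe_image, Set.mem_image, mem_coe, mem_product, Prod.exists]
    constructor
    · rintro ⟨hDm, hD⟩
      obtain ⟨c, hc, d, hd, rfl⟩ := exists_eq_pow_mul_pow_of_dvd hPm hQm hPi hQi hDm hD.1
      exact ⟨c, d, (isBiunitaryDivisor_pow_mul_pow_iff hPm hQm hPi hQi hPQ hc hd).mp hD, rfl⟩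
    · rintro ⟨c, d, ⟨hc, hd⟩, rfl⟩
      have hc' : c ≤ h := by simp only [biunitaryExponents, mem_filter, mem_range] at hc; omega
      have hd' : d ≤ k := by simp only [biunitaryExponents, mem_filter, mem_range] at hd; omega
      exact ⟨(hPm.pow c).mul (hQm.pow d),
        (isBiunitaryDivisor_pow_mul_pow_iff hPm hQm hPi hQi hPQ hc' hd').mpr ⟨hc, hd⟩⟩
  rw [sigmaBU, hset, finsum_mem_coe_finset, sum_image, sum_product, biunitaryPowSum,
    biunitaryPowSum, sum_mul_sum]
  rintro ⟨a, b⟩ - ⟨c, d⟩ - heq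
  simpa using pow_mul_pow_injective hPm hQm hPi hQi hPQ heq

theorem associated_biunitaryPowSum_of_isBUPerfect {h k : ℕ} (hA : IsBUPerfect (P ^ h * Q ^ k)) :
    Associated (biunitaryPowSum P h) (Q ^ k) := by
  have hA' : biunitaryPowSum P h * biunitaryPowSum Q k = P ^ h * Q ^ k :=
    (sigmaBU_pow_mul_pow hPm hQm hPi hQi hPQ h k).symm.trans hA
  refine associated_of_dvd_dvd ?_ ?_
  · exact (isCoprime_biunitaryPowSum P h).symm.pow_right.dvd_of_dvd_mul_left
      (hA' ▸ dvd_mul_right _ _)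
  · exact (isCoprime_biunitaryPowSum Q k).pow_left.dvd_of_dvd_mul_right
      (hA' ▸ dvd_mul_left _ _)

end BiunitaryDivisors

theorem stmt10_general (P Q : F4[X]) (hPm : P.Monic) (hQm : Q.Monic)
    (hPi : Irreducible P) (hQi : Irreducible Q) (hPQ : P ≠ Q)
    (hdeg : P.natDegree ≤ Q.natDegree)
    (h k : ℕ) (hh : 0 < h)
    (hbup : IsBUPerfect (P ^ h * Q ^ k)) :
    Q = P + 1 ∧ ((h = 2 ∧ k = 2) ∨ ∃ r : ℕ, h = 2 ^ r - 1 ∧ k = 2 ^ r - 1) := by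
  have hS := associated_biunitaryPowSum_of_isBUPerfect hPm hQm hPi hQi hPQ hbup
  have hP := hPi.natDegree_pos
  rcases Nat.even_or_odd h with heven | hodd
  · obtain ⟨hQ, hh2, hk2⟩ :=
      eq_add_one_of_associated_biunitaryPowSum_of_even hPm hP hQm hQi hdeg heven hh.ne' hS
    exact ⟨hQ, Or.inl ⟨hh2, hk2⟩⟩
  · obtain ⟨hQ, hr⟩ :=
      eq_add_one_of_associated_biunitaryPowSum_of_odd hPm hP hQm hQi hdeg hodd hS
    exact ⟨hQ, Or.inr hr⟩

theorem stmt10 (P Q : F4[X]) (hPm : P.Monic) (hQm : Q.Monic)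
    (hPi : Irreducible P) (hQi : Irreducible Q) (hPQ : P ≠ Q)
    (hdeg : P.natDegree ≤ Q.natDegree)
    (h k : ℕ) (hh : 0 < h) (hk : 0 < k)
    (hbup : IsBUPerfect (P ^ h * Q ^ k)) :
    Q = P + 1 ∧ ((h = 2 ∧ k = 2) ∨ ∃ r : ℕ, h = 2 ^ r - 1 ∧ k = 2 ^ r - 1) :=
  stmt10_general P Q hPm hQm hPi hQi hPQ hdeg h k hh hbup
end
end

section
/- Let A = P^h Q^k R^l in 𝔽₄[x] be bi-unitary perfect, where P, Q, R are distinct monic irreducible polynomials with deg P ≤ deg Q ≤ deg R and h, k, l are positive integers. Then P + 1 is irreducible and Q = P + 1. -/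
open Polynomial
open scoped Classical

noncomputable section

namespace BUaux

lemma not_dvd_of_ne {P Q : F4[X]} (hPm : P.Monic) (hQm : Q.Monic) (hPi : Irreducible P)
    (hQi : Irreducible Q) (hPQ : P ≠ Q) : ¬ P ∣ Q := fun hd =>
  hPQ (eq_of_monic_of_associated hPm hQm (hPi.associated_of_dvd hQi hd))

lemma not_dvd_pow_mul_pow {P Q R : F4[X]} (hPi : Irreducible P)
    (hnQ : ¬ P ∣ Q) (hnR : ¬ P ∣ R) {b c : ℕ} : ¬ P ∣ Q ^ b * R ^ c := by
  intro hd
  rcases hPi.prime.dvd_mul.mp hd with hd | hd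
  · exact hnQ (hPi.prime.dvd_of_dvd_pow hd)
  · exact hnR (hPi.prime.dvd_of_dvd_pow hd)

lemma exp_unique {P M N : F4[X]} (hP : Prime P) (hM : ¬ P ∣ M) (hN : ¬ P ∣ N)
    {a a' : ℕ} (h : P ^ a * M = P ^ a' * N) : a = a' := by
  by_contra hne
  wlog hlt : a < a' generalizing a a' M N
  · exact this hN hM h.symm (Ne.symm hne) (by omega)
  apply hM
  have hP0 : P ^ a ≠ 0 := pow_ne_zero _ hP.ne_zero
  have heq : P ^ a * M = P ^ a * (P ^ (a' - a) * N) := by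
    rw [h, ← mul_assoc, ← pow_add]
    congr 2
    omega
  have hMN := mul_left_cancel₀ hP0 heq
  rw [hMN]
  exact dvd_mul_of_dvd_left (dvd_pow_self P (by omega)) N


section
variable {P Q R : F4[X]} (hPm : P.Monic) (hQm : Q.Monic) (hRm : R.Monic)
    (hPi : Irreducible P) (hQi : Irreducible Q) (hRi : Irreducible R)
    (hPQ : P ≠ Q) (hPR : P ≠ R) (hQR : Q ≠ R)

include hPm hQm hRm hPi hQi hRi hPQ hPR hQR

lemma triple_inj {a b c a' b' c' : ℕ}
    (h : P ^ a * Q ^ b * R ^ c = P ^ a' * Q ^ b' * R ^ c') :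
    a = a' ∧ b = b' ∧ c = c' := by
  have hnPQ := not_dvd_of_ne hPm hQm hPi hQi hPQ
  have hnPR := not_dvd_of_ne hPm hRm hPi hRi hPR
  have hnQP := not_dvd_of_ne hQm hPm hQi hPi (Ne.symm hPQ)
  have hnQR := not_dvd_of_ne hQm hRm hQi hRi hQR
  have hnRP := not_dvd_of_ne hRm hPm hRi hPi (Ne.symm hPR)
  have hnRQ := not_dvd_of_ne hRm hQm hRi hQi (Ne.symm hQR)
  have hP' : P ^ a * (Q ^ b * R ^ c) = P ^ a' * (Q ^ b' * R ^ c') := by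
    linear_combination h
  have hQ' : Q ^ b * (P ^ a * R ^ c) = Q ^ b' * (P ^ a' * R ^ c') := by
    linear_combination h
  have hR' : R ^ c * (P ^ a * Q ^ b) = R ^ c' * (P ^ a' * Q ^ b') := by
    linear_combination h
  exact ⟨exp_unique hPi.prime (not_dvd_pow_mul_pow hPi hnPQ hnPR)
      (not_dvd_pow_mul_pow hPi hnPQ hnPR) hP',
    exp_unique hQi.prime (not_dvd_pow_mul_pow hQi hnQP hnQR)
      (not_dvd_pow_mul_pow hQi hnQP hnQR) hQ',
    exp_unique hRi.prime (not_dvd_pow_mul_pow hRi hnRP hnRQ)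
      (not_dvd_pow_mul_pow hRi hnRP hnRQ) hR'⟩

omit hPQ hPR hQR in
lemma monic_divisor_structure {h k l : ℕ} {D : F4[X]} (hDm : D.Monic)
    (hdvd : D ∣ P ^ h * Q ^ k * R ^ l) :
    ∃ a b c, a ≤ h ∧ b ≤ k ∧ c ≤ l ∧ D = P ^ a * Q ^ b * R ^ c := by
  obtain ⟨d1, d2, hd1, hd2, hD12⟩ := exists_dvd_and_dvd_of_dvd_mul hdvd
  obtain ⟨d3, d4, hd3, hd4, hD34⟩ := exists_dvd_and_dvd_of_dvd_mul hd1
  obtain ⟨a, ha, hassoc3⟩ := (dvd_prime_pow hPi.prime h).mp hd3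
  obtain ⟨b, hb, hassoc4⟩ := (dvd_prime_pow hQi.prime k).mp hd4
  obtain ⟨c, hc, hassoc2⟩ := (dvd_prime_pow hRi.prime l).mp hd2
  refine ⟨a, b, c, ha, hb, hc, ?_⟩
  have hassoc : Associated D (P ^ a * Q ^ b * R ^ c) := by
    rw [hD12, hD34]
    exact (hassoc3.mul_mul hassoc4).mul_mul hassoc2
  exact eq_of_monic_of_associated hDm (((hPm.pow _).mul (hQm.pow _)).mul (hRm.pow _)) hassoc

omit hPi hQi hRi hPQ hPR hQR in
lemma big_div_eq {h k l a b c : ℕ} (ha : a ≤ h) (hb : b ≤ k) (hc : c ≤ l) :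
    P ^ h * Q ^ k * R ^ l / (P ^ a * Q ^ b * R ^ c)
      = P ^ (h - a) * Q ^ (k - b) * R ^ (l - c) := by
  have key : P ^ h * Q ^ k * R ^ l
      = (P ^ a * Q ^ b * R ^ c) * (P ^ (h - a) * Q ^ (k - b) * R ^ (l - c)) := by
    have e1 : P ^ a * P ^ (h - a) = P ^ h := by rw [← pow_add]; congr 1; omega
    have e2 : Q ^ b * Q ^ (k - b) = Q ^ k := by rw [← pow_add]; congr 1; omega
    have e3 : R ^ c * R ^ (l - c) = R ^ l := by rw [← pow_add]; congr 1; omega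
    calc P ^ h * Q ^ k * R ^ l
        = (P ^ a * P ^ (h-a)) * (Q ^ b * Q ^ (k-b)) * (R ^ c * R ^ (l-c)) := by
          rw [e1, e2, e3]
      _ = (P ^ a * Q ^ b * R ^ c) * (P ^ (h - a) * Q ^ (k - b) * R ^ (l - c)) := by ring
  rw [key]
  exact mul_div_cancel_left₀ _ (((hPm.pow _).mul (hQm.pow _)).mul (hRm.pow _)).ne_zero

omit hQR in
lemma coprime_pow_aux (b c : ℕ) : IsCoprime P (Q ^ b * R ^ c) := by
  have h1 : IsCoprime P Q := hPi.prime.coprime_iff_not_dvd.mpr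
    (not_dvd_of_ne hPm hQm hPi hQi hPQ)
  have h2 : IsCoprime P R := hPi.prime.coprime_iff_not_dvd.mpr
    (not_dvd_of_ne hPm hRm hPi hRi hPR)
  exact (h1.pow_right).mul_right (h2.pow_right)

end

lemma unitary_one (S : F4[X]) : IsUnitaryDivisor 1 S := by
  refine ⟨one_dvd _, ?_⟩
  exact isCoprime_one_left

lemma gcdU_eq_one_iff {S T : F4[X]} :
    gcdU S T = 1 ↔ ∀ E : F4[X], E.Monic → IsUnitaryDivisor E S →
      IsUnitaryDivisor E T → E = 1 := by
  constructor
  · intro hg E hEm hES hET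
    unfold gcdU at hg
    split_ifs at hg with hex
    · obtain ⟨hDm, hDS, hDT, hmax⟩ := hex.choose_spec
      rw [hg] at hmax
      have hdeg : E.degree ≤ (1 : F4[X]).degree := hmax E hEm hES hET
      rw [degree_one] at hdeg
      exact hEm.natDegree_eq_zero.mp
        (natDegree_eq_zero_iff_degree_le_zero.mpr hdeg)
    · exact absurd hg (by simp)
  · intro hall
    have hex : ∃ D : F4[X], D.Monic ∧ IsUnitaryDivisor D S ∧ IsUnitaryDivisor D T ∧
        ∀ E : F4[X], E.Monic → IsUnitaryDivisor E S → IsUnitaryDivisor E T →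
          E.degree ≤ D.degree := by
      refine ⟨1, monic_one, unitary_one S, unitary_one T, fun E hEm hES hET => ?_⟩
      rw [hall E hEm hES hET]
    unfold gcdU
    rw [dif_pos hex]
    obtain ⟨hDm, hDS, hDT, _⟩ := hex.choose_spec
    exact hall _ hDm hDS hDT

section
variable {P Q R : F4[X]} (hPm : P.Monic) (hQm : Q.Monic) (hRm : R.Monic)
    (hPi : Irreducible P) (hQi : Irreducible Q) (hRi : Irreducible R)
    (hPQ : P ≠ Q) (hPR : P ≠ R) (hQR : Q ≠ R)

include hPm hQm hRm hPi hQi hRi hPQ hPR hQR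

lemma unitary_structure {a b c : ℕ} {E : F4[X]} (hEm : E.Monic)
    (hE : IsUnitaryDivisor E (P ^ a * Q ^ b * R ^ c)) :
    ∃ a' b' c', (a' = 0 ∨ a' = a) ∧ (b' = 0 ∨ b' = b) ∧ (c' = 0 ∨ c' = c) ∧
      E = P ^ a' * Q ^ b' * R ^ c' := by
  obtain ⟨hdvd, hcop⟩ := hE
  obtain ⟨a', b', c', ha', hb', hc', hEeq⟩ :=
    monic_divisor_structure hPm hQm hRm hPi hQi hRi hEm hdvd
  rw [hEeq] at hcop
  rw [big_div_eq hPm hQm hRm ha' hb' hc'] at hcop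
  refine ⟨a', b', c', ?_, ?_, ?_, hEeq⟩
  · rcases Nat.eq_zero_or_pos a' with h0 | hpos
    · exact Or.inl h0
    right
    by_contra hne
    have h1 : P ∣ P ^ a' * Q ^ b' * R ^ c' :=
      dvd_mul_of_dvd_left (dvd_mul_of_dvd_left (dvd_pow_self P (by omega)) _) _
    have h2 : P ∣ P ^ (a - a') * Q ^ (b - b') * R ^ (c - c') :=
      dvd_mul_of_dvd_left (dvd_mul_of_dvd_left (dvd_pow_self P (by omega)) _) _
    exact hPi.not_isUnit (hcop.isUnit_of_dvd' h1 h2)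
  · rcases Nat.eq_zero_or_pos b' with h0 | hpos
    · exact Or.inl h0
    right
    by_contra hne
    have h1 : Q ∣ P ^ a' * Q ^ b' * R ^ c' :=
      dvd_mul_of_dvd_left (dvd_mul_of_dvd_right (dvd_pow_self Q (by omega)) _) _
    have h2 : Q ∣ P ^ (a - a') * Q ^ (b - b') * R ^ (c - c') :=
      dvd_mul_of_dvd_left (dvd_mul_of_dvd_right (dvd_pow_self Q (by omega)) _) _
    exact hQi.not_isUnit (hcop.isUnit_of_dvd' h1 h2)
  · rcases Nat.eq_zero_or_pos c' with h0 | hpos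
    · exact Or.inl h0
    right
    by_contra hne
    have h1 : R ∣ P ^ a' * Q ^ b' * R ^ c' :=
      dvd_mul_of_dvd_right (dvd_pow_self R (by omega)) _
    have h2 : R ∣ P ^ (a - a') * Q ^ (b - b') * R ^ (c - c') :=
      dvd_mul_of_dvd_right (dvd_pow_self R (by omega)) _
    exact hRi.not_isUnit (hcop.isUnit_of_dvd' h1 h2)

lemma bu_forward {h k l a b c : ℕ} (ha : a ≤ h) (hb : b ≤ k) (hc : c ≤ l)
    (ha2 : 2 * a ≠ h) (hb2 : 2 * b ≠ k) (hc2 : 2 * c ≠ l) :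
    IsBiunitaryDivisor (P ^ a * Q ^ b * R ^ c) (P ^ h * Q ^ k * R ^ l) := by
  have hdvd : P ^ a * Q ^ b * R ^ c ∣ P ^ h * Q ^ k * R ^ l :=
    mul_dvd_mul (mul_dvd_mul (pow_dvd_pow P ha) (pow_dvd_pow Q hb)) (pow_dvd_pow R hc)
  refine ⟨hdvd, ?_⟩
  rw [big_div_eq hPm hQm hRm ha hb hc]
  rw [gcdU_eq_one_iff]
  intro E hEm hE1 hE2
  obtain ⟨a1, b1, c1, hoa1, hob1, hoc1, hEeq1⟩ :=
    unitary_structure hPm hQm hRm hPi hQi hRi hPQ hPR hQR hEm hE1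
  obtain ⟨a2, b2, c2, hoa2, hob2, hoc2, hEeq2⟩ :=
    unitary_structure hPm hQm hRm hPi hQi hRi hPQ hPR hQR hEm hE2
  obtain ⟨hae, hbe, hce⟩ := triple_inj hPm hQm hRm hPi hQi hRi hPQ hPR hQR
    (hEeq1.symm.trans hEeq2)
  have ha0 : a1 = 0 := by
    rcases hoa1 with h' | h'
    · exact h'
    rcases hoa2 with h'' | h''
    · omega
    omega
  have hb0 : b1 = 0 := by rcases hob1 with h' | h' <;> rcases hob2 with h'' | h'' <;> omega
  have hc0 : c1 = 0 := by rcases hoc1 with h' | h' <;> rcases hoc2 with h'' | h'' <;> omega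
  rw [hEeq1, ha0, hb0, hc0]
  simp

lemma bu_backward {h k l : ℕ} (hh : 0 < h) (hk : 0 < k) (hl : 0 < l) {D : F4[X]}
    (hDm : D.Monic) (hD : IsBiunitaryDivisor D (P ^ h * Q ^ k * R ^ l)) :
    ∃ a b c, a ≤ h ∧ b ≤ k ∧ c ≤ l ∧ 2 * a ≠ h ∧ 2 * b ≠ k ∧ 2 * c ≠ l ∧
      D = P ^ a * Q ^ b * R ^ c := by
  obtain ⟨hdvd, hg⟩ := hD
  obtain ⟨a, b, c, ha, hb, hc, hDeq⟩ :=
    monic_divisor_structure hPm hQm hRm hPi hQi hRi hDm hdvd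
  rw [hDeq, big_div_eq hPm hQm hRm ha hb hc] at hg
  rw [gcdU_eq_one_iff] at hg
  refine ⟨a, b, c, ha, hb, hc, ?_, ?_, ?_, hDeq⟩
  · intro h2a
    have hapos : 0 < a := by omega
    have hkey := hg (P ^ a) (hPm.pow a) ?_ ?_
    · have : (P ^ a).natDegree = 0 := by rw [hkey]; simp
      rw [natDegree_pow] at this
      have hd := hPi.natDegree_pos
      rcases Nat.mul_eq_zero.mp this with h' | h' <;> omega
    · refine ⟨dvd_mul_of_dvd_left (dvd_mul_of_dvd_left dvd_rfl _) _, ?_⟩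
      have : P ^ a * Q ^ b * R ^ c / P ^ a = Q ^ b * R ^ c := by
        rw [mul_assoc]
        exact mul_div_cancel_left₀ _ (pow_ne_zero _ hPm.ne_zero)
      rw [this]
      exact (coprime_pow_aux hPm hQm hRm hPi hQi hRi hPQ hPR b c).pow_left
    · have hha : h - a = a := by omega
      rw [hha]
      refine ⟨dvd_mul_of_dvd_left (dvd_mul_of_dvd_left dvd_rfl _) _, ?_⟩
      have : P ^ a * Q ^ (k - b) * R ^ (l - c) / P ^ a = Q ^ (k - b) * R ^ (l - c) := by
        rw [mul_assoc]
        exact mul_div_cancel_left₀ _ (pow_ne_zero _ hPm.ne_zero)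
      rw [this]
      exact (coprime_pow_aux hPm hQm hRm hPi hQi hRi hPQ hPR _ _).pow_left
  · intro h2b
    have hbpos : 0 < b := by omega
    have hkey := hg (Q ^ b) (hQm.pow b) ?_ ?_
    · have : (Q ^ b).natDegree = 0 := by rw [hkey]; simp
      rw [natDegree_pow] at this
      have hd := hQi.natDegree_pos
      rcases Nat.mul_eq_zero.mp this with h' | h' <;> omega
    · refine ⟨dvd_mul_of_dvd_left (dvd_mul_of_dvd_right dvd_rfl _) _, ?_⟩
      have he : P ^ a * Q ^ b * R ^ c = Q ^ b * (P ^ a * R ^ c) := by ring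
      rw [he, mul_div_cancel_left₀ _ (pow_ne_zero _ hQm.ne_zero)]
      exact (coprime_pow_aux hQm hPm hRm hQi hPi hRi (Ne.symm hPQ) hQR a c).pow_left
    · have hkb : k - b = b := by omega
      rw [hkb]
      refine ⟨dvd_mul_of_dvd_left (dvd_mul_of_dvd_right dvd_rfl _) _, ?_⟩
      have he : P ^ (h - a) * Q ^ b * R ^ (l - c) = Q ^ b * (P ^ (h - a) * R ^ (l - c)) := by
        ring
      rw [he, mul_div_cancel_left₀ _ (pow_ne_zero _ hQm.ne_zero)]
      exact (coprime_pow_aux hQm hPm hRm hQi hPi hRi (Ne.symm hPQ) hQR _ _).pow_left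
  · intro h2c
    have hcpos : 0 < c := by omega
    have hkey := hg (R ^ c) (hRm.pow c) ?_ ?_
    · have : (R ^ c).natDegree = 0 := by rw [hkey]; simp
      rw [natDegree_pow] at this
      have hd := hRi.natDegree_pos
      rcases Nat.mul_eq_zero.mp this with h' | h' <;> omega
    · refine ⟨dvd_mul_of_dvd_right dvd_rfl _, ?_⟩
      have he : P ^ a * Q ^ b * R ^ c = R ^ c * (P ^ a * Q ^ b) := by ring
      rw [he, mul_div_cancel_left₀ _ (pow_ne_zero _ hRm.ne_zero)]
      exact (coprime_pow_aux hRm hPm hQm hRi hPi hQi (Ne.symm hPR) (Ne.symm hQR) a b).pow_left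
    · have hlc : l - c = c := by omega
      rw [hlc]
      refine ⟨dvd_mul_of_dvd_right dvd_rfl _, ?_⟩
      have he : P ^ (h - a) * Q ^ (k - b) * R ^ c = R ^ c * (P ^ (h - a) * Q ^ (k - b)) := by
        ring
      rw [he, mul_div_cancel_left₀ _ (pow_ne_zero _ hRm.ne_zero)]
      exact (coprime_pow_aux hRm hPm hQm hRi hPi hQi (Ne.symm hPR) (Ne.symm hQR) _ _).pow_left

end

def sh (h : ℕ) : Finset ℕ := (Finset.range (h + 1)).filter (fun a => 2 * a ≠ h)

section
variable {P Q R : F4[X]} (hPm : P.Monic) (hQm : Q.Monic) (hRm : R.Monic)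
    (hPi : Irreducible P) (hQi : Irreducible Q) (hRi : Irreducible R)
    (hPQ : P ≠ Q) (hPR : P ≠ R) (hQR : Q ≠ R)

include hPm hQm hRm hPi hQi hRi hPQ hPR hQR

lemma sigmaBU_eq {h k l : ℕ} (hh : 0 < h) (hk : 0 < k) (hl : 0 < l) :
    sigmaBU (P ^ h * Q ^ k * R ^ l)
      = (∑ a ∈ sh h, P ^ a) * (∑ b ∈ sh k, Q ^ b) * (∑ c ∈ sh l, R ^ c) := by
  classical
  set f : ℕ × ℕ × ℕ → F4[X] := fun t => P ^ t.1 * Q ^ t.2.1 * R ^ t.2.2 with hf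
  have hset : {D : F4[X] | D.Monic ∧ IsBiunitaryDivisor D (P ^ h * Q ^ k * R ^ l)}
      = ↑(((sh h) ×ˢ (sh k) ×ˢ (sh l)).image f) := by
    ext D
    simp only [Set.mem_setOf_eq, Finset.coe_image, Set.mem_image, Finset.mem_coe,
      Finset.mem_product, sh, Finset.mem_filter, Finset.mem_range]
    constructor
    · rintro ⟨hDm, hDbu⟩
      obtain ⟨a, b, c, ha, hb, hc, ha2, hb2, hc2, hDeq⟩ :=
        bu_backward hPm hQm hRm hPi hQi hRi hPQ hPR hQR hh hk hl hDm hDbu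
      exact ⟨(a, b, c), ⟨⟨Nat.lt_succ_of_le ha, ha2⟩, ⟨Nat.lt_succ_of_le hb, hb2⟩,
        Nat.lt_succ_of_le hc, hc2⟩, hDeq.symm⟩
    · rintro ⟨⟨a, b, c⟩, ⟨⟨ha, ha2⟩, ⟨hb, hb2⟩, hc, hc2⟩, hDeq⟩
      subst hDeq
      refine ⟨((hPm.pow _).mul (hQm.pow _)).mul (hRm.pow _), ?_⟩
      exact bu_forward hPm hQm hRm hPi hQi hRi hPQ hPR hQR
        (by omega) (by omega) (by omega) ha2 hb2 hc2
  rw [sigmaBU, hset, finsum_mem_coe_finset]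
  rw [Finset.sum_image (fun x hx y hy hxy => ?inj)]
  case inj =>
    obtain ⟨h1, h2, h3⟩ := triple_inj hPm hQm hRm hPi hQi hRi hPQ hPR hQR hxy
    exact Prod.ext h1 (Prod.ext h2 h3)
  rw [Finset.sum_product, Finset.sum_mul_sum, Finset.sum_mul]
  refine Finset.sum_congr rfl fun a _ => ?_
  rw [Finset.sum_product, Finset.sum_mul]
  refine Finset.sum_congr rfl fun b _ => ?_
  rw [Finset.mul_sum]

end

lemma card_sh_even {h : ℕ} (hh : 0 < h) : 2 ∣ (sh h).card := by
  rcases Nat.even_or_odd h with ⟨m, hm⟩ | hodd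
  · have : sh h = (Finset.range (h + 1)).erase m := by
      ext a
      simp only [sh, Finset.mem_filter, Finset.mem_range, Finset.mem_erase]
      omega
    rw [this, Finset.card_erase_of_mem (by simp [Finset.mem_range]; omega),
      Finset.card_range]
    omega
  · have : sh h = Finset.range (h + 1) := by
      ext a
      simp only [sh, Finset.mem_filter, Finset.mem_range]
      rcases hodd with ⟨m, hm⟩
      omega
    rw [this, Finset.card_range]
    rcases hodd with ⟨m, hm⟩
    omega

lemma add_one_dvd_sum {P : F4[X]} {h : ℕ} (hh : 0 < h) :
    (P + 1) ∣ ∑ a ∈ sh h, P ^ a := by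
  have key : ∑ a ∈ sh h, P ^ a
      = (∑ a ∈ sh h, (P ^ a - 1)) + ((sh h).card : F4[X]) := by
    have hs : ∀ a ∈ sh h, P ^ a = (P ^ a - 1) + 1 := fun a _ => by ring
    rw [Finset.sum_congr rfl hs, Finset.sum_add_distrib, Finset.sum_const,
      nsmul_eq_mul, mul_one]
  rw [key]
  have hcard : ((sh h).card : F4[X]) = 0 := by
    have := card_sh_even hh
    exact (CharP.cast_eq_zero_iff F4[X] 2 _).mpr this
  rw [hcard, add_zero]
  apply Finset.dvd_sum
  intro a _
  have : P + 1 = P - 1 := by rw [CharTwo.sub_eq_add]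
  rw [this]
  simpa using sub_dvd_pow_sub_pow P 1 a

lemma add_one_monic {P : F4[X]} (hPm : P.Monic) (hd : 0 < P.natDegree) : (P + 1).Monic := by
  apply hPm.add_of_left
  rw [degree_one]
  exact natDegree_pos_iff_degree_pos.mp hd

lemma factor_of_add_one {P Q R : F4[X]} (hPm : P.Monic) (hQm : Q.Monic) (hRm : R.Monic)
    (hPi : Irreducible P) (hQi : Irreducible Q) (hRi : Irreducible R)
    {h k l : ℕ} (hdvd : (P + 1) ∣ P ^ h * Q ^ k * R ^ l)
    (hdegQ : P.natDegree ≤ Q.natDegree) (hdegR : P.natDegree ≤ R.natDegree) :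
    P + 1 = Q ∨ P + 1 = R := by
  have hdP : 0 < P.natDegree := hPi.natDegree_pos
  have hP1m : (P + 1).Monic := add_one_monic hPm hdP
  obtain ⟨a, b, c, ha, hb, hc, heq⟩ :=
    monic_divisor_structure hPm hQm hRm hPi hQi hRi hP1m hdvd
  have ha0 : a = 0 := by
    by_contra hne
    have h1 : P ∣ P + 1 := by
      rw [heq]
      exact dvd_mul_of_dvd_left (dvd_mul_of_dvd_left (dvd_pow_self P hne) _) _
    have h2 : P ∣ 1 := (dvd_add_right (dvd_refl P)).mp h1
    exact hPi.not_isUnit (isUnit_of_dvd_one h2)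
  subst ha0
  rw [pow_zero, one_mul] at heq
  have hdeg : (P + 1).natDegree = P.natDegree := by
    rw [← Polynomial.C_1, natDegree_add_C]
  have hdeg2 : (P + 1).natDegree = b * Q.natDegree + c * R.natDegree := by
    rw [heq, natDegree_mul (pow_ne_zero _ hQm.ne_zero) (pow_ne_zero _ hRm.ne_zero),
      natDegree_pow, natDegree_pow]
  have hkey : P.natDegree = b * Q.natDegree + c * R.natDegree := by
    rw [← hdeg, hdeg2]
  have hb' : b * P.natDegree ≤ b * Q.natDegree := Nat.mul_le_mul_left b hdegQ
  have hc' : c * P.natDegree ≤ c * R.natDegree := Nat.mul_le_mul_left c hdegR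
  have hge : (b + c) * P.natDegree ≤ P.natDegree := by
    rw [add_mul]
    calc b * P.natDegree + c * P.natDegree ≤ b * Q.natDegree + c * R.natDegree := by omega
      _ = P.natDegree := hkey.symm
  have hbc1 : b + c ≤ 1 := by
    by_contra hgt
    have : 2 * P.natDegree ≤ (b + c) * P.natDegree :=
      Nat.mul_le_mul_right _ (by omega)
    omega
  have hbc0 : b + c ≠ 0 := by
    intro h0
    have hb0 : b = 0 := by omega
    have hc0 : c = 0 := by omega
    rw [hb0, hc0] at hkey
    simp at hkey
    omega
  rcases Nat.eq_zero_or_pos b with hb0 | hbpos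
  · right
    have hc1 : c = 1 := by omega
    rw [heq, hb0, hc1]
    simp
  · left
    have hb1 : b = 1 := by omega
    have hc0 : c = 0 := by omega
    rw [heq, hb1, hc0]
    simp

end BUaux

theorem stmt11 (P Q R : F4[X]) (hPm : P.Monic) (hQm : Q.Monic) (hRm : R.Monic)
    (hPi : Irreducible P) (hQi : Irreducible Q) (hRi : Irreducible R)
    (hPQ : P ≠ Q) (hPR : P ≠ R) (hQR : Q ≠ R)
    (hdeg1 : P.natDegree ≤ Q.natDegree) (hdeg2 : Q.natDegree ≤ R.natDegree)
    (h k l : ℕ) (hh : 0 < h) (hk : 0 < k) (hl : 0 < l)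
    (hbup : IsBUPerfect (P ^ h * Q ^ k * R ^ l)) :
    Irreducible (P + 1) ∧ Q = P + 1 := by
  have hA : (∑ a ∈ BUaux.sh h, P ^ a) * (∑ b ∈ BUaux.sh k, Q ^ b) * (∑ c ∈ BUaux.sh l, R ^ c)
      = P ^ h * Q ^ k * R ^ l := by
    rw [← BUaux.sigmaBU_eq hPm hQm hRm hPi hQi hRi hPQ hPR hQR hh hk hl]
    exact hbup
  have hTP : (∑ a ∈ BUaux.sh h, P ^ a) ∣ P ^ h * Q ^ k * R ^ l :=
    ⟨(∑ b ∈ BUaux.sh k, Q ^ b) * (∑ c ∈ BUaux.sh l, R ^ c), by rw [← hA]; ring⟩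
  have hTQ : (∑ b ∈ BUaux.sh k, Q ^ b) ∣ P ^ h * Q ^ k * R ^ l :=
    ⟨(∑ a ∈ BUaux.sh h, P ^ a) * (∑ c ∈ BUaux.sh l, R ^ c), by rw [← hA]; ring⟩
  have hP1A : (P + 1) ∣ P ^ h * Q ^ k * R ^ l :=
    dvd_trans (BUaux.add_one_dvd_sum hh) hTP
  have hQ1A : (Q + 1) ∣ P ^ h * Q ^ k * R ^ l :=
    dvd_trans (BUaux.add_one_dvd_sum hk) hTQ
  have hdegPR : P.natDegree ≤ R.natDegree := le_trans hdeg1 hdeg2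
  rcases BUaux.factor_of_add_one hPm hQm hRm hPi hQi hRi hP1A hdeg1 hdegPR with hPQ1 | hPR1
  · rw [← hPQ1]
    exact ⟨hPQ1 ▸ hQi, rfl⟩
  · exfalso
    have hdegR : R.natDegree = P.natDegree := by
      rw [← hPR1, ← Polynomial.C_1, natDegree_add_C]
    have hdegQ : Q.natDegree = P.natDegree := by omega
    have hQ1A' : (Q + 1) ∣ Q ^ k * P ^ h * R ^ l := by
      have : Q ^ k * P ^ h * R ^ l = P ^ h * Q ^ k * R ^ l := by ring
      rw [this]
      exact hQ1A
    rcases BUaux.factor_of_add_one hQm hPm hRm hQi hPi hRi hQ1A' (by omega) (by omega)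
      with hQP1 | hQR1
    · -- Q + 1 = P, so Q = P + 1 = R
      have hQeq : Q = P + 1 := by
        rw [← hQP1, add_assoc, CharTwo.add_self_eq_zero, add_zero]
      exact hQR (hQeq.trans hPR1)
    · -- Q + 1 = R = P + 1, so Q = P
      have : Q = P := by
        have := hQR1.trans hPR1.symm
        exact add_right_cancel this
      exact hPQ this.symm
end
end
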